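/- (Safe announcements are safe.) In any update of an epistemic model M by a safe pseudo-anonymous announcement of φ, for every state (s,a) of the updated model M^{φ⟡!} and every agent i ≠ a, there exists a state (s',a') with (s,a) ∼'_i (s',a') and a' ≠ a. That is, no agent other than the announcer knows who the announcer is, in any state of the updated model. -/

import Mathlib

/-! Since `a`'s relation is reflexive, `▲φ` holds at `s`; unfolding the fixpoint once gives three
agents who know `▲φ` at `s`, and one of them, `b`, differs from both `a` and `i`. Then `(s, b)` is a
state of `M^{φ⟡!}`, and `i`, being neither `a` nor `b`, cannot tell it from `(s, a)`. -/

/-- An epistemic (Kripke) model over agent set `Agt` and state set `St`. -/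
structure Model (Agt : Type) (St : Type) where
  rel : Agt → St → St → Prop
  val : ℕ → St → Prop

/-- The model is an epistemic model proper: each agent's relation is an equivalence. -/
def isEquivModel {Agt St : Type} (M : Model Agt St) : Prop :=
  ∀ a, Equivalence (M.rel a)

/-- Formulas: atoms, ⊥, →, ∧, K_a, ▲ (safety), [φ⟡]ψ (pseudo-anonymous announcement),
    [φ⟡!]ψ (safe/intentional anonymous announcement). -/
inductive Form (Agt : Type) : Type where
  | atom : ℕ → Form Agt
  | bot  : Form Agt
  | imp  : Form Agt → Form Agt → Form Agt
  | and  : Form Agt → Form Agt → Form Agt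
  | K    : Agt → Form Agt → Form Agt
  | tri  : Form Agt → Form Agt
  | annA : Form Agt → Form Agt → Form Agt
  | annS : Form Agt → Form Agt → Form Agt

def Form.neg {Agt : Type} (φ : Form Agt) : Form Agt := .imp φ .bot

/-- One step of the safety operator: `⋁_{G ∈ N³} E_G (P ∧ X)`. -/
def fsafe {Agt St : Type} (M : Model Agt St) (P X : St → Prop) (s : St) : Prop :=
  ∃ G : Finset Agt, G.card = 3 ∧ ∀ a ∈ G, ∀ t, M.rel a s t → P t ∧ X t

/-- `▲P` semantically: greatest fixpoint of `fsafe M P`, i.e. union of post-fixed points. -/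
def triSem {Agt St : Type} (M : Model Agt St) (P : St → Prop) (s : St) : Prop :=
  ∃ X : St → Prop, X s ∧ ∀ t, X t → fsafe M P X t

/-- Product update of `M` with an action model whose events are `E`, relation `arel`, and
    (semantic) preconditions `pre`.  States not satisfying the precondition are cut off
    from the relation (this encodes the restriction to legal states). -/
def prodUpd {Agt St E : Type} (M : Model Agt St) (arel : Agt → E → E → Prop)
    (pre : E → St → Prop) : Model Agt (St × E) where
  rel c p q := pre p.2 p.1 ∧ pre q.2 q.1 ∧ M.rel c p.1 q.1 ∧ arel c p.2 q.2
  val n p := M.val n p.1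

/-- Action relation of the pseudo-anonymous action model: `a ∼_c b` iff `(a = c ↔ b = c)`. -/
def anonRel {Agt : Type} (c a b : Agt) : Prop := (a = c ↔ b = c)

/-- The pseudo-anonymous style update `M^{φ⟡}` (with precondition `pre a`). -/
def updA {Agt St : Type} (M : Model Agt St) (pre : Agt → St → Prop) : Model Agt (St × Agt) :=
  prodUpd M anonRel pre

/-- Satisfaction. -/
def Sat {Agt : Type} : {St : Type} → Model Agt St → St → Form Agt → Prop
  | _, M, s, .atom n => M.val n s
  | _, _, _, .bot => False
  | _, M, s, .imp φ ψ => Sat M s φ → Sat M s ψ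
  | _, M, s, .and φ ψ => Sat M s φ ∧ Sat M s ψ
  | _, M, s, .K a φ => ∀ t, M.rel a s t → Sat M t φ
  | _, M, s, .tri φ => triSem M (fun t => Sat M t φ) s
  | _, M, s, .annA φ ψ => ∀ a, (∀ t, M.rel a s t → Sat M t φ) →
      Sat (updA M (fun b t => ∀ u, M.rel b t u → Sat M u φ)) (s, a) ψ
  | _, M, s, .annS φ ψ => ∀ a, (∀ t, M.rel a s t → triSem M (fun u => Sat M u φ) t) →
      Sat (updA M (fun b t => ∀ u, M.rel b t u → triSem M (fun v => Sat M v φ) u)) (s, a) ψ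

/-- The pseudo-anonymous update `M^{φ⟡}`. -/
def updAnn {Agt St : Type} (M : Model Agt St) (φ : Form Agt) : Model Agt (St × Agt) :=
  updA M (fun b t => ∀ u, M.rel b t u → Sat M u φ)

/-- The safe (intentional) anonymous update `M^{φ⟡!}`. -/
def updSafe {Agt St : Type} (M : Model Agt St) (φ : Form Agt) : Model Agt (St × Agt) :=
  updA M (fun b t => ∀ u, M.rel b t u → triSem M (fun v => Sat M v φ) u)

/-- Public announcement update: restriction of `M` to `P` (encoded by cutting the relation). -/
def restrict {Agt St : Type} (M : Model Agt St) (P : St → Prop) : Model Agt St where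
  rel a x y := P x ∧ P y ∧ M.rel a x y
  val := M.val

/-- Iterative approximations `▲_n`. -/
def triN {Agt St : Type} (M : Model Agt St) (P : St → Prop) : ℕ → St → Prop
  | 0 => P
  | n + 1 => fun s => P s ∧ ∃ G : Finset Agt, G.card = 3 ∧
      ∀ a ∈ G, ∀ t, M.rel a s t → triN M P n t

/-- Standard bisimulation between two models. -/
structure Bisim {Agt St₁ St₂ : Type} (M₁ : Model Agt St₁) (M₂ : Model Agt St₂)
    (Z : St₁ → St₂ → Prop) : Prop where
  atoms : ∀ s t, Z s t → ∀ n, (M₁.val n s ↔ M₂.val n t)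
  forth : ∀ s t, Z s t → ∀ a u, M₁.rel a s u → ∃ v, M₂.rel a t v ∧ Z u v
  back  : ∀ s t, Z s t → ∀ a v, M₂.rel a t v → ∃ u, M₁.rel a s u ∧ Z u v

/-- `f` is a group assignment function for `M`. -/
def GroupAssign {Agt St : Type} (M : Model Agt St) (f : St → Finset Agt) : Prop :=
  (∀ t, f t = ∅ ∨ (f t).card = 3) ∧
  (∀ t t' i, i ∈ f t → M.rel i t t' → f t' ≠ ∅)

/-- `σ : Fin (m+1) → St` is an `f`-consistent path. -/
def FPath {Agt St : Type} (M : Model Agt St) (f : St → Finset Agt) (m : ℕ)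
    (σ : Fin (m + 1) → St) : Prop :=
  ∀ k : Fin m, ∃ a ∈ f (σ k.castSucc), M.rel a (σ k.castSucc) (σ k.succ)

theorem Finset.exists_mem_ne_ne {α : Type*} [DecidableEq α] {s : Finset α} (hs : 2 < s.card)
    (a c : α) : ∃ b ∈ s, b ≠ a ∧ b ≠ c := by
  have hcard : 1 < (s.erase a).card := by
    have := Finset.pred_card_le_card_erase (s := s) (a := a)
    omega
  obtain ⟨b, hb, hbc⟩ := (s.erase a).exists_mem_ne hcard c
  exact ⟨b, Finset.mem_of_mem_erase hb, Finset.ne_of_mem_erase hb, hbc⟩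

theorem triSem.fsafe {Agt St : Type} {M : Model Agt St} {P : St → Prop} {s : St}
    (h : triSem M P s) : fsafe M P (triSem M P) s := by
  obtain ⟨X, hXs, hX⟩ := h
  obtain ⟨G, hG, hGX⟩ := hX s hXs
  exact ⟨G, hG, fun b hb t hst => ⟨(hGX b hb t hst).1, X, (hGX b hb t hst).2, hX⟩⟩

theorem triSem.exists_knows_ne_ne {Agt St : Type} [DecidableEq Agt] {M : Model Agt St}
    {P : St → Prop} {s : St} (h : triSem M P s) (a c : Agt) :
    ∃ b, b ≠ a ∧ b ≠ c ∧ ∀ t, M.rel b s t → triSem M P t := by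
  obtain ⟨G, hG, hGsafe⟩ := h.fsafe
  obtain ⟨b, hbG, hba, hbc⟩ := G.exists_mem_ne_ne (by omega) a c
  exact ⟨b, hba, hbc, fun t hst => (hGsafe b hbG t hst).2⟩

theorem stmt4 {Agt St : Type}
    (M : Model Agt St) (hM : isEquivModel M) (φ : Form Agt) (s : St) (a : Agt)
    (hleg : ∀ t, M.rel a s t → triSem M (fun v => Sat M v φ) t) :
    ∀ i : Agt, i ≠ a →
      ∃ (s' : St) (a' : Agt), (updSafe M φ).rel i (s, a) (s', a') ∧ a' ≠ a := by
  classical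
  intro i hi
  have hsafe : triSem M (fun v => Sat M v φ) s := hleg s ((hM a).refl s)
  obtain ⟨b, hba, hbi, hb⟩ := hsafe.exists_knows_ne_ne a i
  exact ⟨s, b, ⟨hleg, hb, (hM i).refl s, iff_of_false hi.symm hbi⟩, hba⟩
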